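/- Let 0 < λ_l < λ_u be reals, let κ = λ_u/λ_l, and let θ ∈ [0, π]. Set η = (1 + cos θ)/(2κ − (κ − 1)(1 + cos θ)). Then the denominator 2κ − (κ − 1)(1 + cos θ) is strictly positive, and the rescaled step size c = (1/λ_l − 1/λ_u)·η + 1/λ_u satisfies 1/c = (λ_l + λ_u − (λ_u − λ_l)·cos θ)/2; equivalently, (λ_l + λ_u)/(λ_u − λ_l) − 2/(c·(λ_u − λ_l)) = cos θ. -/

import Mathlib

/-!
The denominator of the UBA step is `2 + (κ - 1)(1 - cos θ)`, and multiplying it by `λ_l` gives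
twice the Chebyshev node `r = (λ_l + λ_u - (λ_u - λ_l) cos θ)/2`; so `η = λ_l (1 + cos θ)/(2r)`.
Putting the rescaled step over the common denominator `λ_u r`, its numerator collapses to `λ_u`,
whence `c = 1/r`. Inverting the affine map `cos θ ↦ r` gives the last identity.
-/

open Real

noncomputable def chebyshevNode (a b c : ℝ) : ℝ := (a + b - (b - a) * c) / 2

lemma chebyshevNode_pos {a b c : ℝ} (ha : 0 < a) (hab : a ≤ b) (hc : c ≤ 1) :
    0 < chebyshevNode a b c := by
  unfold chebyshevNode
  nlinarith

lemma uba_denominator_eq {a b : ℝ} (c : ℝ) (ha : a ≠ 0) :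
    2 * (b / a) - (b / a - 1) * (1 + c) = 2 * chebyshevNode a b c / a := by
  unfold chebyshevNode
  field_simp
  ring

lemma rescaled_uba_step_eq_inv_chebyshevNode {a b c : ℝ} (ha : a ≠ 0) (hb : b ≠ 0)
    (hr : chebyshevNode a b c ≠ 0) :
    (1 / a - 1 / b) * ((1 + c) / (2 * (b / a) - (b / a - 1) * (1 + c))) + 1 / b =
      (chebyshevNode a b c)⁻¹ := by
  have hr' : a + b - (b - a) * c ≠ 0 := by
    contrapose! hr
    simp [chebyshevNode, hr]
  rw [uba_denominator_eq c ha, chebyshevNode]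
  field_simp
  ring

lemma chebyshevNode_affine_inverse {a b c : ℝ} (hab : a ≠ b) :
    (a + b) / (b - a) - 2 / ((chebyshevNode a b c)⁻¹ * (b - a)) = c := by
  have hba : b - a ≠ 0 := sub_ne_zero.mpr hab.symm
  field_simp
  rw [chebyshevNode]
  ring

theorem uba_rescaled_step_is_chebyshev_node
    (lamL lamU θ : ℝ) (h0 : 0 < lamL) (h1 : lamL < lamU) :
    0 < 2 * (lamU / lamL) - (lamU / lamL - 1) * (1 + Real.cos θ) ∧
    (1 : ℝ) /
        ((1 / lamL - 1 / lamU) *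
            ((1 + Real.cos θ) / (2 * (lamU / lamL) - (lamU / lamL - 1) * (1 + Real.cos θ))) +
          1 / lamU) =
      (lamL + lamU - (lamU - lamL) * Real.cos θ) / 2 ∧
    (lamL + lamU) / (lamU - lamL) -
        2 / (((1 / lamL - 1 / lamU) *
            ((1 + Real.cos θ) / (2 * (lamU / lamL) - (lamU / lamL - 1) * (1 + Real.cos θ))) +
          1 / lamU) * (lamU - lamL)) =
      Real.cos θ := by
  have hr := chebyshevNode_pos h0 h1.le (cos_le_one θ)
  have hstep := rescaled_uba_step_eq_inv_chebyshevNode h0.ne' (h0.trans h1).ne' hr.ne'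
  refine ⟨?_, ?_, ?_⟩
  · rw [uba_denominator_eq _ h0.ne']
    positivity
  · rw [hstep, one_div, inv_inv]
    rfl
  · rw [hstep]
    exact chebyshevNode_affine_inverse h1.ne
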